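/- Extremal entropy of DF-free digraph templates: Let F be a graph with at least one edge, let DF be the digraph obtained from F by replacing each edge with a directed edge in each direction, and let P = (P_n) where P_n is the set of digraphs on [n] containing no copy of DF. Then for every n, ex(n,P) = (1 − log₄3)·ex(n,F) + log₄3·C(n,2), where ex(n,F) is the Turán number of F. -/

import Mathlib

open Filter

/-- The edges of the complete graph `K_n`: ordered pairs `(i, j)` with `i < j`. -/
abbrev Edge (n : ℕ) := {p : Fin n × Fin n // p.1 < p.2}

/-- A digraph on `[n]`, encoded as a 4-colouring of `E(K_n)`: each pair `{i,j}` with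
`i < j` records whether the directed edge `i → j` is present (first component) and
whether `j → i` is present (second component). -/
abbrev DiColouring (n : ℕ) := Edge n → Bool × Bool

/-- A digraph template: a nonempty palette of the 4 possible states at each pair. -/
abbrev DiTemplate (n : ℕ) := Edge n → Finset (Bool × Bool)

def DProper {n : ℕ} (t : DiTemplate n) : Prop := ∀ e, (t e).Nonempty

def DRealises {n : ℕ} (c : DiColouring n) (t : DiTemplate n) : Prop := ∀ e, c e ∈ t e

/-- The entropy (base 4) of a digraph template. -/
noncomputable def DEnt {n : ℕ} (t : DiTemplate n) : ℝ :=
  ∑ e : Edge n, Real.logb 4 ((t e).card)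

/-- The digraph encoded by `c` has a double edge between `u` and `v`. -/
def HasDoubleEdge {n : ℕ} (c : DiColouring n) (u v : Fin n) : Prop :=
  ∃ e : Edge n, ((e.1.1 = u ∧ e.1.2 = v) ∨ (e.1.1 = v ∧ e.1.2 = u)) ∧ c e = (true, true)

/-- The digraph encoded by `c` contains a copy of `DF`, the digraph obtained from the
graph `F` by replacing every edge by a directed edge in each direction. -/
def ContainsDF {m n : ℕ} (F : SimpleGraph (Fin m)) (c : DiColouring n) : Prop :=
  ∃ ψ : Fin m ↪ Fin n, ∀ i j : Fin m, F.Adj i j → HasDoubleEdge c (ψ i) (ψ j)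

/-- `G` contains a subgraph isomorphic to `F`. -/
def ContainsSub {m n : ℕ} (F : SimpleGraph (Fin m)) (G : SimpleGraph (Fin n)) : Prop :=
  ∃ ψ : Fin m ↪ Fin n, ∀ i j : Fin m, F.Adj i j → G.Adj (ψ i) (ψ j)

/-- The Turán number `ex(n, F)`: the maximum number of edges of an `F`-free graph
on `n` vertices. -/
noncomputable def turan {m : ℕ} (F : SimpleGraph (Fin m)) (n : ℕ) : ℕ :=
  sSup {x | ∃ G : SimpleGraph (Fin n), ¬ ContainsSub F G ∧ G.edgeSet.ncard = x}

/-- The extremal entropy `ex(n, P)` for the property `P` of `DF`-free digraphs. -/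
noncomputable def exEntDF {m : ℕ} (F : SimpleGraph (Fin m)) (n : ℕ) : ℝ :=
  sSup {x | ∃ t : DiTemplate n, DProper t ∧
    (∀ c : DiColouring n, DRealises c t → ¬ ContainsDF F c) ∧ DEnt t = x}

/-! The base-4 entropy of a pair is `1` when its palette may contain the double edge and at most
`log₄ 3` when it may not, so a template is bounded by `(1 - log₄ 3)·e(G) + log₄ 3·C(n,2)` where `G`
is the graph of pairs whose palette contains the double edge. Choosing the double edge wherever it
is allowed gives a realisation whose double-edge graph contains `G`, so `G` is `F`-free and
`e(G) ≤ ex(n, F)`. Conversely an extremal `F`-free graph, with all four states on its edges and the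
three other states elsewhere, attains the bound. -/

namespace Edge

variable {n : ℕ}

def Joins (e : Edge n) (u v : Fin n) : Prop :=
  (e.1.1 = u ∧ e.1.2 = v) ∨ (e.1.1 = v ∧ e.1.2 = u)

theorem Joins.symm {e : Edge n} {u v : Fin n} (h : e.Joins u v) : e.Joins v u :=
  Or.symm h

theorem eq_of_joins {e e' : Edge n} (h : e'.Joins e.1.1 e.1.2) : e' = e := by
  rcases h with ⟨h1, h2⟩ | ⟨h1, h2⟩
  · exact Subtype.ext (Prod.ext h1 h2)
  · have := e.2
    have := e'.2
    omega

end Edge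

section EdgeGraph

variable {n : ℕ}

def edgeGraph (P : Edge n → Prop) : SimpleGraph (Fin n) where
  Adj u v := ∃ e : Edge n, e.Joins u v ∧ P e
  symm := ⟨fun _ _ ⟨e, he, hP⟩ => ⟨e, he.symm, hP⟩⟩
  loopless := ⟨fun u ⟨e, he, _⟩ => by
    have := e.2
    rcases he with ⟨h1, h2⟩ | ⟨h1, h2⟩ <;> omega⟩

theorem edgeGraph_adj {P : Edge n → Prop} (e : Edge n) : (edgeGraph P).Adj e.1.1 e.1.2 ↔ P e :=
  ⟨fun ⟨_, he', hP⟩ => Edge.eq_of_joins he' ▸ hP, fun hP => ⟨e, Or.inl ⟨rfl, rfl⟩, hP⟩⟩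

theorem edgeGraph_mono {P Q : Edge n → Prop} (h : ∀ e, P e → Q e) :
    edgeGraph P ≤ edgeGraph Q :=
  fun _ _ ⟨e, he, hP⟩ => ⟨e, he, h e hP⟩

theorem edgeGraph_le {P : Edge n → Prop} {G : SimpleGraph (Fin n)}
    (h : ∀ e : Edge n, P e → G.Adj e.1.1 e.1.2) : edgeGraph P ≤ G := by
  rintro u v ⟨e, ⟨rfl, rfl⟩ | ⟨rfl, rfl⟩, hP⟩
  · exact h e hP
  · exact (h e hP).symm

def doubleEdgeGraph (c : DiColouring n) : SimpleGraph (Fin n) :=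
  edgeGraph (c · = (true, true))

theorem containsDF_iff {m : ℕ} (F : SimpleGraph (Fin m)) (c : DiColouring n) :
    ContainsDF F c ↔ ContainsSub F (doubleEdgeGraph c) :=
  Iff.rfl

theorem ContainsSub.mono {m : ℕ} {F : SimpleGraph (Fin m)} {G H : SimpleGraph (Fin n)}
    (hG : ContainsSub F G) (hGH : G ≤ H) : ContainsSub F H :=
  let ⟨ψ, hψ⟩ := hG
  ⟨ψ, fun i j hij => hGH (hψ i j hij)⟩

end EdgeGraph

section Counting

open Finset

variable {n : ℕ}

theorem ncard_edgeSet_eq_card_filter (G : SimpleGraph (Fin n)) [DecidableRel G.Adj] :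
    G.edgeSet.ncard = #{e : Edge n | G.Adj e.1.1 e.1.2} := by
  rw [Set.ncard_eq_toFinset_card', ← SimpleGraph.edgeFinset, eq_comm]
  refine card_bij (fun e _ => s(e.1.1, e.1.2)) (fun e he => ?_) (fun e _ e' _ hee => ?_) ?_
  · simpa using he
  · exact Edge.eq_of_joins (Sym2.eq_iff.1 hee)
  · intro x hx
    induction x using Sym2.inductionOn with
    | hf a b =>
      rw [SimpleGraph.mem_edgeFinset, SimpleGraph.mem_edgeSet] at hx
      rcases lt_or_gt_of_ne hx.ne with h | h
      · exact ⟨⟨(a, b), h⟩, by simpa using hx, rfl⟩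
      · exact ⟨⟨(b, a), h⟩, by simpa using hx.symm, Sym2.eq_swap⟩

theorem card_edge : Fintype.card (Edge n) = n.choose 2 := by
  have htop := ncard_edgeSet_eq_card_filter (⊤ : SimpleGraph (Fin n))
  rw [Set.ncard_eq_toFinset_card', ← SimpleGraph.edgeFinset,
    SimpleGraph.card_edgeFinset_top_eq_card_choose_two, Fintype.card_fin] at htop
  rw [htop, ← card_univ]
  congr 1
  ext e
  simp [e.2.ne]

theorem ncard_edgeSet_le_choose_two (G : SimpleGraph (Fin n)) :
    G.edgeSet.ncard ≤ n.choose 2 := by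
  classical
  rw [ncard_edgeSet_eq_card_filter, ← card_edge]
  exact card_filter_le _ _

theorem sum_ite_one_logb_three (P : Edge n → Prop) [DecidablePred P] :
    ∑ e : Edge n, (if P e then 1 else Real.logb 4 3) =
      (1 - Real.logb 4 3) * #{e | P e} + Real.logb 4 3 * n.choose 2 := by
  have hsplit : ∀ e, (if P e then 1 else Real.logb 4 3) =
      (1 - Real.logb 4 3) * (if P e then 1 else 0) + Real.logb 4 3 := by
    intro e
    split_ifs <;> ring
  simp only [hsplit, sum_add_distrib, ← mul_sum, sum_boole, sum_const, card_univ, card_edge,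
    nsmul_eq_mul]
  ring

end Counting

section Entropy

theorem logb_three_le_one : Real.logb 4 3 ≤ 1 := by
  rw [Real.logb_le_iff_le_rpow] <;> norm_num

theorem logb_card_le (s : Finset (Bool × Bool)) (hs : s.Nonempty) :
    Real.logb 4 s.card ≤ if (true, true) ∈ s then 1 else Real.logb 4 3 := by
  have hpos : (0 : ℝ) < s.card := by exact_mod_cast hs.card_pos
  split_ifs with h
  · rw [← Real.logb_self_eq_one (b := 4) (by norm_num)]
    exact Real.logb_le_logb_of_le (by norm_num) hpos (by exact_mod_cast s.card_le_univ)
  · have hsub : s ⊆ Finset.univ.erase (true, true) := fun x hx =>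
      Finset.mem_erase.2 ⟨fun hx' => h (hx' ▸ hx), Finset.mem_univ x⟩
    have hcard : s.card ≤ 3 := Finset.card_le_card hsub
    exact Real.logb_le_logb_of_le (by norm_num) hpos (by exact_mod_cast hcard)

variable {n : ℕ}

def allowedDoubleGraph (t : DiTemplate n) : SimpleGraph (Fin n) :=
  edgeGraph (fun e => (true, true) ∈ t e)

theorem dEnt_le {t : DiTemplate n} (ht : DProper t) :
    DEnt t ≤ (1 - Real.logb 4 3) * (allowedDoubleGraph t).edgeSet.ncard +
      Real.logb 4 3 * n.choose 2 := by
  classical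
  calc DEnt t ≤ ∑ e : Edge n, (if (true, true) ∈ t e then 1 else Real.logb 4 3) :=
        Finset.sum_le_sum fun e _ => logb_card_le (t e) (ht e)
    _ = _ := by
      rw [sum_ite_one_logb_three, ncard_edgeSet_eq_card_filter]
      simp only [allowedDoubleGraph, edgeGraph_adj]

theorem exists_realises_allowedDoubleGraph_le {t : DiTemplate n} (ht : DProper t) :
    ∃ c : DiColouring n, DRealises c t ∧ allowedDoubleGraph t ≤ doubleEdgeGraph c := by
  classical
  refine ⟨fun e => if (true, true) ∈ t e then (true, true) else (ht e).choose, fun e => ?_,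
    edgeGraph_mono fun e he => if_pos he⟩
  dsimp only
  split_ifs with h
  · exact h
  · exact (ht e).choose_spec

theorem not_containsSub_allowedDoubleGraph {m : ℕ} {F : SimpleGraph (Fin m)} {t : DiTemplate n}
    (ht : DProper t) (hfree : ∀ c : DiColouring n, DRealises c t → ¬ ContainsDF F c) :
    ¬ ContainsSub F (allowedDoubleGraph t) := fun hF =>
  let ⟨c, hc, hle⟩ := exists_realises_allowedDoubleGraph_le ht
  hfree c hc ((containsDF_iff F c).2 (hF.mono hle))

def templateOfGraph (G : SimpleGraph (Fin n)) [DecidableRel G.Adj] : DiTemplate n :=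
  fun e => if G.Adj e.1.1 e.1.2 then Finset.univ else Finset.univ.erase (true, true)

variable (G : SimpleGraph (Fin n)) [DecidableRel G.Adj]

theorem dProper_templateOfGraph : DProper (templateOfGraph G) := by
  intro e
  unfold templateOfGraph
  split_ifs
  · exact Finset.univ_nonempty
  · exact ⟨(false, false), by simp⟩

theorem dEnt_templateOfGraph :
    DEnt (templateOfGraph G) =
      (1 - Real.logb 4 3) * G.edgeSet.ncard + Real.logb 4 3 * n.choose 2 := by
  have hterm : ∀ e : Edge n, Real.logb 4 (templateOfGraph G e).card =
      if G.Adj e.1.1 e.1.2 then 1 else Real.logb 4 3 := by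
    intro e
    unfold templateOfGraph
    split_ifs
    · norm_num
    · rw [Finset.card_erase_of_mem (Finset.mem_univ _)]
      norm_num
  rw [DEnt, Finset.sum_congr rfl fun e _ => hterm e, sum_ite_one_logb_three,
    ncard_edgeSet_eq_card_filter]

theorem not_containsDF_of_realises_templateOfGraph {m : ℕ} {F : SimpleGraph (Fin m)}
    (hG : ¬ ContainsSub F G) {c : DiColouring n} (hc : DRealises c (templateOfGraph G)) :
    ¬ ContainsDF F c := by
  refine fun hF => hG (((containsDF_iff F c).1 hF).mono (edgeGraph_le fun e he => ?_))
  have hce := hc e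
  unfold templateOfGraph at hce
  split_ifs at hce with hadj
  · exact hadj
  · simp [he] at hce

end Entropy

theorem isGreatest_turan {m : ℕ} (F : SimpleGraph (Fin m)) (hF : ∃ i j, F.Adj i j) (n : ℕ) :
    IsGreatest {x | ∃ G : SimpleGraph (Fin n), ¬ ContainsSub F G ∧ G.edgeSet.ncard = x}
      (turan F n) := by
  have hbdd : BddAbove {x | ∃ G : SimpleGraph (Fin n), ¬ ContainsSub F G ∧ G.edgeSet.ncard = x} :=
    ⟨n.choose 2, by rintro _ ⟨G, -, rfl⟩; exact ncard_edgeSet_le_choose_two G⟩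
  have hbot : ¬ ContainsSub F (⊥ : SimpleGraph (Fin n)) := fun ⟨_, hψ⟩ =>
    let ⟨i, j, hij⟩ := hF
    hψ i j hij
  exact ⟨Nat.sSup_mem ⟨_, ⊥, hbot, rfl⟩ hbdd, fun _ hx => le_csSup hbdd hx⟩

/-- Extremal entropy of `DF`-free digraph templates (Theorem 4.4). -/
theorem exEnt_DF_free {m : ℕ} (F : SimpleGraph (Fin m)) (hF : ∃ i j, F.Adj i j) (n : ℕ) :
    exEntDF F n =
      (1 - Real.logb 4 3) * (turan F n : ℝ) + Real.logb 4 3 * (n.choose 2 : ℝ) := by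
  classical
  obtain ⟨⟨G, hGfree, hGcard⟩, hturan⟩ := isGreatest_turan F hF n
  refine IsGreatest.csSup_eq ⟨⟨templateOfGraph G, dProper_templateOfGraph G,
    fun c hc => not_containsDF_of_realises_templateOfGraph G hGfree hc,
    by rw [dEnt_templateOfGraph, hGcard]⟩, ?_⟩
  rintro _ ⟨t, ht, hfree, rfl⟩
  have hle : ((allowedDoubleGraph t).edgeSet.ncard : ℝ) ≤ turan F n := by
    exact_mod_cast hturan ⟨_, not_containsSub_allowedDoubleGraph ht hfree, rfl⟩
  calc DEnt t ≤ (1 - Real.logb 4 3) * (allowedDoubleGraph t).edgeSet.ncard +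
        Real.logb 4 3 * n.choose 2 := dEnt_le ht
    _ ≤ _ := by gcongr; linarith [logb_three_le_one]
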